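/- If x is a vertex of P_ASEP(n) containing a λ-loop between v₁ and v₂, then x' = x ↑^{v₃} (v₁,v₂), obtained by the λ-loop breaking procedure, is a vertex of P_ASEP(n+1). -/

import Mathlib

/-
If `x = μ y + (1 - μ) z` with `y, z ∈ P_ASEP(n+1)`, then `y` and `z` vanish wherever the broken
loop `x'` does. At the new node the degree equations and the subtour constraints on the pairs
`{v₁, v₃}`, `{v₂, v₃}` then force `y` to be itself a broken loop, `y = ŷ ↑^{v₃} (v₁, v₂)` with
`ŷ = collapse y`. Breaking a loop keeps all degrees and changes the weight inside a node set only
through the loop, so `ŷ ∈ P_ASEP(n)`; as `x = μ ŷ + (1 - μ) ẑ`, extremality of `x` gives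
`ŷ = ẑ`, hence `y = z`.
-/

open Finset

/-- The Asymmetric Subtour Elimination Polytope on `n` nodes. -/
def PASEP (n : ℕ) (x : Fin n → Fin n → ℝ) : Prop :=
  (∀ i j, 0 ≤ x i j) ∧ (∀ i, x i i = 0) ∧
  (∀ j, ∑ i, x i j = 1) ∧ (∀ i, ∑ j, x i j = 1) ∧
  ∀ S : Finset (Fin n), 2 ≤ S.card → S.card ≤ n - 2 →
    1 ≤ ∑ i ∈ S, ∑ j ∈ Sᶜ, x i j

/-- The `λ`-loop breaking procedure `x ↑^{v₃} (v₁, v₂)`: a new node `v₃`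
(the last element of `Fin (n+1)`; old nodes are embedded via `Fin.castSucc`)
is inserted into the `λ`-loop between `v₁` and `v₂`, with
`x'_{v₁v₃} = x'_{v₃v₂} = λ`, `x'_{v₃v₁} = x'_{v₂v₃} = 1 − λ`,
`x'_{v₁v₂} = x'_{v₂v₁} = 0`, all other arcs incident to `v₃` zero, and all other
entries unchanged. -/
def breakLoop (n : ℕ) (x : Fin n → Fin n → ℝ) (v₁ v₂ : Fin n) (lam : ℝ) :
    Fin (n + 1) → Fin (n + 1) → ℝ := fun u v =>
  if hu : u = Fin.last n then
    (if hv : v = Fin.last n then 0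
     else if v.castPred hv = v₂ then lam
     else if v.castPred hv = v₁ then 1 - lam
     else 0)
  else if hv : v = Fin.last n then
    (if u.castPred hu = v₁ then lam
     else if u.castPred hu = v₂ then 1 - lam
     else 0)
  else if u.castPred hu = v₁ ∧ v.castPred hv = v₂ then 0
  else if u.castPred hu = v₂ ∧ v.castPred hv = v₁ then 0
  else x (u.castPred hu) (v.castPred hv)


/-- A vertex (extreme point) of the polytope. -/
def IsVertex (n : ℕ) (x : Fin n → Fin n → ℝ) : Prop :=
  PASEP n x ∧ ∀ y z : Fin n → Fin n → ℝ, ∀ μ : ℝ,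
    PASEP n y → PASEP n z → 0 < μ → μ < 1 →
    (∀ i j, x i j = μ * y i j + (1 - μ) * z i j) → y = z

theorem sum_sum_compl_eq_card_sub {ι : Type*} [Fintype ι] [DecidableEq ι] {x : ι → ι → ℝ}
    (hrow : ∀ i, ∑ j, x i j = 1) (S : Finset ι) :
    ∑ i ∈ S, ∑ j ∈ Sᶜ, x i j = #S - ∑ i ∈ S, ∑ j ∈ S, x i j := by
  have hsplit : ∀ i, ∑ j ∈ Sᶜ, x i j = 1 - ∑ j ∈ S, x i j := fun i => by
    rw [← hrow i, ← sum_add_sum_compl S (x i)]; ring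
  simp only [hsplit, sum_sub_distrib, sum_const, nsmul_one]

theorem eq_zero_and_eq_zero_of_convex_comb_eq_zero {a b μ : ℝ} (ha : 0 ≤ a) (hb : 0 ≤ b)
    (hμ₀ : 0 < μ) (hμ₁ : μ < 1) (h : μ * a + (1 - μ) * b = 0) : a = 0 ∧ b = 0 := by
  have hμa := mul_nonneg hμ₀.le ha
  have hμb := mul_nonneg (sub_nonneg.2 hμ₁.le) hb
  constructor <;> nlinarith

namespace PASEP

variable {n : ℕ} {x : Fin n → Fin n → ℝ}

theorem sum_sum_le (hx : PASEP n x) {S : Finset (Fin n)} (h1 : 1 ≤ #S) (hn : #S < n) :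
    ∑ i ∈ S, ∑ j ∈ S, x i j ≤ #S - 1 := by
  obtain ⟨-, hdiag, hcol, hrow, hsub⟩ := hx
  rcases (show #S = 1 ∨ (2 ≤ #S ∧ #S ≤ n - 2) ∨ #Sᶜ = 1 by
      rw [card_compl, Fintype.card_fin]; omega) with hS | ⟨hS2, hSn⟩ | hS
  · obtain ⟨a, rfl⟩ := card_eq_one.mp hS
    simp [hdiag]
  · linarith [hsub S hS2 hSn, sum_sum_compl_eq_card_sub hrow S]
  · -- everything leaving `S` enters the single node outside it
    obtain ⟨w, hw⟩ := card_eq_one.mp hS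
    have hin : ∑ i ∈ S, ∑ j ∈ Sᶜ, x i j = 1 := by
      simp only [hw, sum_singleton]
      rw [← hcol w, ← sum_add_sum_compl S (fun i => x i w), hw, sum_singleton, hdiag, add_zero]
    linarith [sum_sum_compl_eq_card_sub hrow S]

theorem add_swap_le_one (hx : PASEP n x) {p q : Fin n} (hpq : p ≠ q) (hn : 2 < n) :
    x p q + x q p ≤ 1 := by
  have h := hx.sum_sum_le (S := {p, q}) (by simp [hpq]) (by rw [card_pair hpq]; exact hn)
  simp only [sum_pair hpq, hx.2.1, card_pair hpq, Nat.cast_ofNat] at h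
  linarith

end PASEP

theorem pasep_iff_sum_sum_le {n : ℕ} {x : Fin n → Fin n → ℝ} :
    PASEP n x ↔ (∀ i j, 0 ≤ x i j) ∧ (∀ i, x i i = 0) ∧ (∀ j, ∑ i, x i j = 1) ∧
      (∀ i, ∑ j, x i j = 1) ∧
      ∀ S : Finset (Fin n), 2 ≤ #S → #S ≤ n - 2 → ∑ i ∈ S, ∑ j ∈ S, x i j ≤ #S - 1 := by
  refine ⟨fun ⟨hnn, hdiag, hcol, hrow, hsub⟩ => ⟨hnn, hdiag, hcol, hrow, fun S h2 hn2 => ?_⟩,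
    fun ⟨hnn, hdiag, hcol, hrow, hS⟩ => ⟨hnn, hdiag, hcol, hrow, fun S h2 hn2 => ?_⟩⟩
  · linarith [hsub S h2 hn2, sum_sum_compl_eq_card_sub hrow S]
  · linarith [hS S h2 hn2, sum_sum_compl_eq_card_sub hrow S]

theorem Fin.sum_finset_eq_sum_castSucc_add {M : Type*} [AddCommMonoid M] {n : ℕ}
    (S : Finset (Fin (n + 1))) (f : Fin (n + 1) → M) :
    ∑ i ∈ S, f i = ∑ u ∈ {u : Fin n | u.castSucc ∈ S}, f u.castSucc +
      if Fin.last n ∈ S then f (Fin.last n) else 0 := by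
  rw [sum_filter, ← Fin.sum_univ_castSucc (fun i => if i ∈ S then f i else 0), sum_ite_mem,
    univ_inter]

theorem Fin.card_finset_eq_card_castSucc_add {n : ℕ} (S : Finset (Fin (n + 1))) :
    #S = #{u : Fin n | u.castSucc ∈ S} + if Fin.last n ∈ S then 1 else 0 := by
  simp only [card_eq_sum_ones, Fin.sum_finset_eq_sum_castSucc_add S]

section breakLoop

variable {n : ℕ} (x : Fin n → Fin n → ℝ) (v₁ v₂ : Fin n) (lam : ℝ)

@[simp]
theorem breakLoop_castSucc_castSucc (u v : Fin n) :
    breakLoop n x v₁ v₂ lam u.castSucc v.castSucc =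
      if u = v₁ ∧ v = v₂ then 0 else if u = v₂ ∧ v = v₁ then 0 else x u v := by
  simp only [breakLoop, Fin.castSucc_ne_last, dite_false, Fin.castPred_castSucc]
  congr!

@[simp]
theorem breakLoop_castSucc_last (u : Fin n) :
    breakLoop n x v₁ v₂ lam u.castSucc (Fin.last n) =
      if u = v₁ then lam else if u = v₂ then 1 - lam else 0 := by
  simp only [breakLoop, Fin.castSucc_ne_last, dite_false, Fin.castPred_castSucc, dite_true]
  congr!

@[simp]
theorem breakLoop_last_castSucc (v : Fin n) :
    breakLoop n x v₁ v₂ lam (Fin.last n) v.castSucc =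
      if v = v₂ then lam else if v = v₁ then 1 - lam else 0 := by
  simp only [breakLoop, Fin.castSucc_ne_last, dite_false, Fin.castPred_castSucc, dite_true]
  congr!

@[simp]
theorem breakLoop_last_last : breakLoop n x v₁ v₂ lam (Fin.last n) (Fin.last n) = 0 := by
  simp [breakLoop]

end breakLoop

/-- For `y` supported like a broken loop, this is the collapse of the tight set `{v₂, v₃}`. -/
def collapse {n : ℕ} (v₁ v₂ : Fin n) (y : Fin (n + 1) → Fin (n + 1) → ℝ) :
    Fin n → Fin n → ℝ := fun u v =>
  if u = v₁ ∧ v = v₂ then y v₁.castSucc (Fin.last n)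
  else if u = v₂ ∧ v = v₁ then y v₂.castSucc (Fin.last n)
  else y u.castSucc v.castSucc

section loop

variable {n : ℕ} {x : Fin n → Fin n → ℝ} {v₁ v₂ : Fin n} {lam : ℝ}

theorem breakLoop_castSucc_castSucc_eq_sub (hne : v₁ ≠ v₂) (ha : x v₁ v₂ = lam)
    (hb : x v₂ v₁ = 1 - lam) (u v : Fin n) :
    breakLoop n x v₁ v₂ lam u.castSucc v.castSucc =
      x u v - (if u = v₁ ∧ v = v₂ then lam else 0) - (if u = v₂ ∧ v = v₁ then 1 - lam else 0) := by
  rw [breakLoop_castSucc_castSucc]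
  split_ifs <;> grind

theorem breakLoop_castSucc_last_eq_add (hne : v₁ ≠ v₂) (u : Fin n) :
    breakLoop n x v₁ v₂ lam u.castSucc (Fin.last n) =
      (if u = v₁ then lam else 0) + (if u = v₂ then 1 - lam else 0) := by
  rw [breakLoop_castSucc_last]
  split_ifs <;> grind

theorem breakLoop_last_castSucc_eq_add (hne : v₁ ≠ v₂) (v : Fin n) :
    breakLoop n x v₁ v₂ lam (Fin.last n) v.castSucc =
      (if v = v₂ then lam else 0) + (if v = v₁ then 1 - lam else 0) := by
  rw [breakLoop_last_castSucc]
  split_ifs <;> grind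

theorem breakLoop_rowSum_castSucc (hne : v₁ ≠ v₂) (ha : x v₁ v₂ = lam)
    (hb : x v₂ v₁ = 1 - lam) (u : Fin n) :
    ∑ j, breakLoop n x v₁ v₂ lam u.castSucc j = ∑ v, x u v := by
  simp only [Fin.sum_univ_castSucc, breakLoop_castSucc_castSucc_eq_sub hne ha hb,
    breakLoop_castSucc_last_eq_add hne, sum_sub_distrib, ite_and, sum_ite_irrel, sum_ite_eq',
    mem_univ, if_true, sum_const_zero]
  split_ifs <;> ring

theorem breakLoop_rowSum_last (hne : v₁ ≠ v₂) :
    ∑ j, breakLoop n x v₁ v₂ lam (Fin.last n) j = 1 := by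
  simp [Fin.sum_univ_castSucc, breakLoop_last_castSucc_eq_add hne, sum_add_distrib]

theorem breakLoop_colSum_castSucc (hne : v₁ ≠ v₂) (ha : x v₁ v₂ = lam)
    (hb : x v₂ v₁ = 1 - lam) (v : Fin n) :
    ∑ i, breakLoop n x v₁ v₂ lam i v.castSucc = ∑ u, x u v := by
  simp only [Fin.sum_univ_castSucc, breakLoop_castSucc_castSucc_eq_sub hne ha hb,
    breakLoop_last_castSucc_eq_add hne, sum_sub_distrib, ite_and, sum_ite_eq', mem_univ, if_true]
  split_ifs <;> ring

theorem breakLoop_colSum_last (hne : v₁ ≠ v₂) :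
    ∑ i, breakLoop n x v₁ v₂ lam i (Fin.last n) = 1 := by
  simp [Fin.sum_univ_castSucc, breakLoop_castSucc_last_eq_add hne, sum_add_distrib]

theorem sum_sum_breakLoop (hne : v₁ ≠ v₂) (ha : x v₁ v₂ = lam) (hb : x v₂ v₁ = 1 - lam)
    (S : Finset (Fin (n + 1))) :
    ∑ i ∈ S, ∑ j ∈ S, breakLoop n x v₁ v₂ lam i j =
      ∑ u ∈ {u : Fin n | u.castSucc ∈ S}, ∑ v ∈ {u : Fin n | u.castSucc ∈ S}, x u v
        - (if v₁.castSucc ∈ S ∧ v₂.castSucc ∈ S then 1 else 0)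
        + if Fin.last n ∈ S then
            (if v₁.castSucc ∈ S then 1 else 0) + (if v₂.castSucc ∈ S then 1 else 0) else 0 := by
  simp only [Fin.sum_finset_eq_sum_castSucc_add S, breakLoop_castSucc_castSucc_eq_sub hne ha hb,
    breakLoop_castSucc_last_eq_add hne, breakLoop_last_castSucc_eq_add hne, breakLoop_last_last,
    sum_sub_distrib, sum_add_distrib, ite_and, sum_ite_irrel, sum_const_zero, sum_ite_eq',
    mem_filter, mem_univ, true_and]
  split_ifs <;> ring

@[simp]
theorem collapse_apply_left (y : Fin (n + 1) → Fin (n + 1) → ℝ) :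
    collapse v₁ v₂ y v₁ v₂ = y v₁.castSucc (Fin.last n) := by
  simp [collapse]

theorem collapse_apply_right (hne : v₁ ≠ v₂) (y : Fin (n + 1) → Fin (n + 1) → ℝ) :
    collapse v₁ v₂ y v₂ v₁ = y v₂.castSucc (Fin.last n) := by
  simp [collapse, hne.symm]

theorem collapse_breakLoop (hne : v₁ ≠ v₂) (ha : x v₁ v₂ = lam) (hb : x v₂ v₁ = 1 - lam) :
    collapse v₁ v₂ (breakLoop n x v₁ v₂ lam) = x := by
  funext u v
  simp only [collapse, breakLoop_castSucc_castSucc, breakLoop_castSucc_last, if_neg hne.symm]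
  split_ifs <;> grind

theorem pasep_breakLoop (hx : PASEP n x) (hne : v₁ ≠ v₂) (ha : x v₁ v₂ = lam)
    (hb : x v₂ v₁ = 1 - lam) : PASEP (n + 1) (breakLoop n x v₁ v₂ lam) := by
  have ⟨hnn, hdiag, hcol, hrow, _⟩ := hx
  have hlam : 0 ≤ lam := ha ▸ hnn v₁ v₂
  have hlam' : 0 ≤ 1 - lam := hb ▸ hnn v₂ v₁
  refine pasep_iff_sum_sum_le.2 ⟨fun i j => ?_, fun i => ?_, fun j => ?_, fun i => ?_,
    fun S h2 hS => ?_⟩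
  · unfold breakLoop
    split_ifs <;> first | exact le_rfl | assumption | exact hnn _ _
  · induction i using Fin.lastCases with
    | last => exact breakLoop_last_last x v₁ v₂ lam
    | cast u => simp [hdiag]
  · induction j using Fin.lastCases with
    | last => exact breakLoop_colSum_last hne
    | cast v => rw [breakLoop_colSum_castSucc hne ha hb, hcol]
  · induction i using Fin.lastCases with
    | last => exact breakLoop_rowSum_last hne
    | cast u => rw [breakLoop_rowSum_castSucc hne ha hb, hrow]
  · have hcard := Fin.card_finset_eq_card_castSucc_add S
    set T : Finset (Fin n) := {u | u.castSucc ∈ S}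
    have hT := hx.sum_sum_le (S := T) (by split_ifs at hcard <;> omega)
      (by split_ifs at hcard <;> omega)
    rw [sum_sum_breakLoop hne ha hb, hcard]
    by_cases hL : Fin.last n ∈ S <;> by_cases h₁ : v₁.castSucc ∈ S <;>
      by_cases h₂ : v₂.castSucc ∈ S <;>
      simp only [hL, h₁, h₂, and_self, and_true, and_false, if_true, if_false] <;>
      push_cast <;> linarith

theorem pasep_of_pasep_breakLoop (hx : PASEP (n + 1) (breakLoop n x v₁ v₂ lam)) (hne : v₁ ≠ v₂)
    (ha : x v₁ v₂ = lam) (hb : x v₂ v₁ = 1 - lam) : PASEP n x := by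
  obtain ⟨hnn, hdiag, hcol, hrow, hsub⟩ := pasep_iff_sum_sum_le.1 hx
  refine pasep_iff_sum_sum_le.2 ⟨fun u v => ?_, fun u => ?_, fun v => ?_, fun u => ?_,
    fun T h2 hT => ?_⟩
  · rw [← collapse_breakLoop hne ha hb]
    unfold collapse
    split_ifs <;> exact hnn _ _
  · have h := hdiag u.castSucc
    rwa [breakLoop_castSucc_castSucc, if_neg fun h => hne (h.1.symm.trans h.2),
      if_neg fun h => hne (h.2.symm.trans h.1)] at h
  · rw [← breakLoop_colSum_castSucc hne ha hb, hcol]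
  · rw [← breakLoop_rowSum_castSucc hne ha hb, hrow]
  · -- lift `T`, adding the new node when it closes the loop inside `T`
    by_cases hboth : v₁ ∈ T ∧ v₂ ∈ T
    · have hS : #(insert (Fin.last n) (T.map Fin.castSuccEmb)) = #T + 1 := by simp
      have h := hsub (insert (Fin.last n) (T.map Fin.castSuccEmb)) (by rw [hS]; omega)
        (by rw [hS]; omega)
      rw [sum_sum_breakLoop hne ha hb] at h
      simpa [hboth, le_sub_iff_add_le] using h
    · have h := hsub (T.map Fin.castSuccEmb) (by simp; omega) (by simp; omega)
      rw [sum_sum_breakLoop hne ha hb] at h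
      simpa [hboth] using h

theorem breakLoop_collapse_eq_of_support {y : Fin (n + 1) → Fin (n + 1) → ℝ} (hne : v₁ ≠ v₂)
    (hy : PASEP (n + 1) y) (hsupp : ∀ i j, breakLoop n x v₁ v₂ lam i j = 0 → y i j = 0) :
    collapse v₁ v₂ y v₂ v₁ = 1 - collapse v₁ v₂ y v₁ v₂ ∧
      breakLoop n (collapse v₁ v₂ y) v₁ v₂ (collapse v₁ v₂ y v₁ v₂) = y := by
  rw [collapse_apply_right hne, collapse_apply_left]
  have h₁₂ : y v₁.castSucc v₂.castSucc = 0 := hsupp _ _ (by simp)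
  have h₂₁ : y v₂.castSucc v₁.castSucc = 0 := hsupp _ _ (by simp)
  have hin : ∀ u, u ≠ v₁ → u ≠ v₂ → y u.castSucc (Fin.last n) = 0 :=
    fun u h₁ h₂ => hsupp _ _ (by simp [h₁, h₂])
  have hout : ∀ v, v ≠ v₁ → v ≠ v₂ → y (Fin.last n) v.castSucc = 0 :=
    fun v h₁ h₂ => hsupp _ _ (by simp [h₁, h₂])
  have hn : 2 < n + 1 := by
    have := v₁.isLt; have := v₂.isLt; have := Fin.val_ne_of_ne hne; omega
  have ⟨_, hdiag, hcol, hrow, _⟩ := hy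
  have hinflow : y v₁.castSucc (Fin.last n) + y v₂.castSucc (Fin.last n) = 1 := by
    rw [← hcol (Fin.last n), Fin.sum_univ_castSucc, hdiag,
      Fintype.sum_eq_add v₁ v₂ hne fun u hu => hin u hu.1 hu.2, add_zero]
  have houtflow : y (Fin.last n) v₁.castSucc + y (Fin.last n) v₂.castSucc = 1 := by
    rw [← hrow (Fin.last n), Fin.sum_univ_castSucc, hdiag,
      Fintype.sum_eq_add v₁ v₂ hne fun v hv => hout v hv.1 hv.2, add_zero]
  have h₁ := hy.add_swap_le_one (Fin.castSucc_ne_last v₁) hn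
  have h₂ := hy.add_swap_le_one (Fin.castSucc_ne_last v₂) hn
  refine ⟨by linarith, funext₂ fun i j => ?_⟩
  induction i using Fin.lastCases with
  | last =>
    induction j using Fin.lastCases with
    | last => rw [breakLoop_last_last, hdiag]
    | cast v =>
      rw [breakLoop_last_castSucc]
      split_ifs with hv₂ hv₁
      · subst hv₂; linarith
      · subst hv₁; linarith
      · exact (hout v hv₁ hv₂).symm
  | cast u =>
    induction j using Fin.lastCases with
    | last =>
      rw [breakLoop_castSucc_last]
      split_ifs with hu₁ hu₂
      · rw [hu₁]
      · subst hu₂; linarith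
      · exact (hin u hu₁ hu₂).symm
    | cast v =>
      rw [breakLoop_castSucc_castSucc]
      split_ifs with h h'
      · rw [h.1, h.2, h₁₂]
      · rw [h'.1, h'.2, h₂₁]
      · simp only [collapse, if_neg h, if_neg h']

end loop

theorem breakLoop_isVertex_general (n : ℕ) (x : Fin n → Fin n → ℝ) (hx : IsVertex n x)
    (v₁ v₂ : Fin n) (hne : v₁ ≠ v₂) (lam : ℝ)
    (ha : x v₁ v₂ = lam) (hb : x v₂ v₁ = 1 - lam) :
    IsVertex (n + 1) (breakLoop n x v₁ v₂ lam) := by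
  obtain ⟨hxP, hext⟩ := hx
  refine ⟨pasep_breakLoop hxP hne ha hb, fun y z μ hy hz hμ₀ hμ₁ hmix => ?_⟩
  have hsupp (i j) (h : breakLoop n x v₁ v₂ lam i j = 0) : y i j = 0 ∧ z i j = 0 :=
    eq_zero_and_eq_zero_of_convex_comb_eq_zero (hy.1 i j) (hz.1 i j) hμ₀ hμ₁ (h ▸ hmix i j).symm
  obtain ⟨hy₂₁, hy'⟩ := breakLoop_collapse_eq_of_support hne hy fun i j h => (hsupp i j h).1
  obtain ⟨hz₂₁, hz'⟩ := breakLoop_collapse_eq_of_support hne hz fun i j h => (hsupp i j h).2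
  have hcollapse : collapse v₁ v₂ y = collapse v₁ v₂ z := by
    refine hext _ _ μ (pasep_of_pasep_breakLoop (hy'.symm ▸ hy) hne rfl hy₂₁)
      (pasep_of_pasep_breakLoop (hz'.symm ▸ hz) hne rfl hz₂₁) hμ₀ hμ₁ fun u v => ?_
    rw [← collapse_breakLoop hne ha hb]
    simp only [collapse, hmix]
    split_ifs <;> rfl
  rw [← hy', ← hz', hcollapse]

/-- If `x` is a vertex of `P_ASEP(n)` containing a `λ`-loop between `v₁` and
`v₂`, then `x' = x ↑^{v₃} (v₁,v₂)`, obtained by the `λ`-loop breaking procedure,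
is a vertex of `P_ASEP(n+1)`. -/
theorem breakLoop_isVertex (n : ℕ) (x : Fin n → Fin n → ℝ) (hx : IsVertex n x)
    (v₁ v₂ : Fin n) (hne : v₁ ≠ v₂) (lam : ℝ) (h0 : 0 < lam) (h1 : lam < 1)
    (ha : x v₁ v₂ = lam) (hb : x v₂ v₁ = 1 - lam) :
    IsVertex (n + 1) (breakLoop n x v₁ v₂ lam) :=
  breakLoop_isVertex_general n x hx v₁ v₂ hne lam ha hb
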